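/- Assume the Lipschitz conditions |w₀(v) − w₀(v')| ≤ l₀√(2m)·‖v − v'‖ for all v, v' ∈ ℝ^{m+1}, |w_j(a,b) − w_j(a',b')| ≤ l_j·(|a − a'| + |b − b'|) for all a, a', b, b' ∈ ℝ (j = 1,…,m), and |u₀(z) − u₀(z')| ≤ l_J·|z − z'| for all z, z' ∈ ℝ. Then for all bounded measurable ψ¹, ψ² : [0,∞) → ℝ^{m+1} (with the same initial vector v⁰) and all t ≥ 0: |(Πψ¹)₀(t) − (Πψ²)₀(t)| ≤ (l₀√(2m)/k₀ + l_J·e^{k₀ω}/(1 − e^{−k₀ω}))·sup_{s≥0}‖ψ¹(s) − ψ²(s)‖ and |(Πψ¹)_j(t) − (Πψ²)_j(t)| ≤ (2l_j/k_j)·sup_{s≥0}‖ψ¹(s) − ψ²(s)‖ for j = 1,…,m. (This is the contraction estimate for the operator Π in the proof of Theorem 3.) -/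

import Mathlib

/-- The Euclidean norm on `Fin n → ℝ`. -/
noncomputable def eNorm {n : ℕ} (v : Fin n → ℝ) : ℝ := Real.sqrt (∑ j, v j ^ 2)

/-- The operator `Π` from the proof of Theorem 3: coordinate `0` gets
`(Πψ)₀(t) = e^{−k₀t}v⁰₀ + ∫₀^t e^{−k₀(t−s)} w₀(ψ(s)) ds
  + Σ_{0 ≤ θ_i < t} e^{−k₀(t−θ_i)} u₀(ψ₀(θ_i))`,
and the coordinates `j = 1,…,m` get
`(Πψ)_j(t) = e^{−k_jt}v⁰_j + ∫₀^t e^{−k_j(t−s)} w_j(ψ₀(s), ψ_j(s)) ds`. -/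
noncomputable def PiOp (m : ℕ) (θ : ℤ → ℝ) (k : Fin (m + 1) → ℝ)
    (w₀ : (Fin (m + 1) → ℝ) → ℝ) (w : Fin (m + 1) → ℝ → ℝ → ℝ) (u₀ : ℝ → ℝ)
    (v0 : Fin (m + 1) → ℝ) (ψ : ℝ → Fin (m + 1) → ℝ) : ℝ → Fin (m + 1) → ℝ := fun t j =>
  if j = 0 then
    Real.exp (-(k 0) * t) * v0 0
      + (∫ s in (0:ℝ)..t, Real.exp (-(k 0) * (t - s)) * w₀ (ψ s))
      + ∑' i : ℤ, (if 0 ≤ θ i ∧ θ i < t then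
          Real.exp (-(k 0) * (t - θ i)) * u₀ (ψ (θ i) 0) else 0)
  else
    Real.exp (-(k j) * t) * v0 j
      + ∫ s in (0:ℝ)..t, Real.exp (-(k j) * (t - s)) * w j (ψ s 0) (ψ s j)

/-! The integral parts are controlled by the Lipschitz bounds together with
`∫₀ᵗ e^{-k(t-s)} ds ≤ 1/k`. For the impulses, (C4) puts `θ_i` in `[iω, (i+1)ω)`; if `n` is the
last index with `nω < t`, then `t - θ_i > (n - i - 1)ω`, so the impulse terms are dominated by
`e^{kω}` times a geometric series of ratio `e^{-kω}`. -/

open MeasureTheory Set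

lemma abs_le_eNorm {n : ℕ} (v : Fin n → ℝ) (j : Fin n) : |v j| ≤ eNorm v := by
  rw [← Real.sqrt_sq_eq_abs]
  exact Real.sqrt_le_sqrt
    (Finset.single_le_sum (f := fun i => v i ^ 2) (fun i _ => sq_nonneg _) (Finset.mem_univ j))

lemma eNorm_eq_norm_toLp {n : ℕ} (v : Fin n → ℝ) : eNorm v = ‖WithLp.toLp 2 v‖ := by
  simp [eNorm, EuclideanSpace.norm_eq, Real.norm_eq_abs, sq_abs]

lemma eNorm_sub_le {n : ℕ} (v v' : Fin n → ℝ) :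
    eNorm (fun j => v j - v' j) ≤ eNorm v + eNorm v' := by
  change eNorm (v - v') ≤ _
  rw [eNorm_eq_norm_toLp, eNorm_eq_norm_toLp, eNorm_eq_norm_toLp, WithLp.toLp_sub]
  exact norm_sub_le _ _

lemma eNorm_sub_le_iSup {n : ℕ} {ψ₁ ψ₂ : ℝ → Fin n → ℝ}
    (hψ₁ : ∃ B, ∀ t, eNorm (ψ₁ t) ≤ B) (hψ₂ : ∃ B, ∀ t, eNorm (ψ₂ t) ≤ B) {s : ℝ} (hs : 0 ≤ s) :
    eNorm (fun j => ψ₁ s j - ψ₂ s j) ≤ ⨆ s : Ici (0 : ℝ), eNorm (fun j => ψ₁ s.1 j - ψ₂ s.1 j) := by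
  obtain ⟨B₁, hB₁⟩ := hψ₁
  obtain ⟨B₂, hB₂⟩ := hψ₂
  refine le_ciSup (f := fun s : Ici (0 : ℝ) => eNorm (fun j => ψ₁ s.1 j - ψ₂ s.1 j))
    ⟨B₁ + B₂, ?_⟩ ⟨s, hs⟩
  rintro x ⟨s, rfl⟩
  exact (eNorm_sub_le _ _).trans (add_le_add (hB₁ _) (hB₂ _))

lemma intervalIntegrable_of_abs_le {g : ℝ → ℝ} (hg : Measurable g) (hbd : ∃ C, ∀ s, |g s| ≤ C)
    (a b : ℝ) : IntervalIntegrable g volume a b := by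
  obtain ⟨C, hC⟩ := hbd
  exact intervalIntegrable_const.mono_fun' hg.aestronglyMeasurable (ae_of_all _ hC)

lemma integral_exp_decay {k : ℝ} (hk : k ≠ 0) (t : ℝ) :
    ∫ s in (0 : ℝ)..t, Real.exp (-k * (t - s)) = (1 - Real.exp (-k * t)) / k := by
  have hderiv (s : ℝ) :
      HasDerivAt (fun s => Real.exp (-k * (t - s)) / k) (Real.exp (-k * (t - s))) s := by
    refine ((((hasDerivAt_id s).const_sub t).const_mul (-k)).exp.div_const k).congr_deriv ?_
    simp only [id_eq]
    field_simp
  rw [intervalIntegral.integral_eq_sub_of_hasDerivAt (fun s _ => hderiv s)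
    ((by fun_prop : Continuous fun s => Real.exp (-k * (t - s))).intervalIntegrable _ _)]
  simp only [sub_self, mul_zero, Real.exp_zero, sub_zero]
  ring

lemma abs_integral_exp_decay_mul_le {k t C : ℝ} (hk : 0 < k) (ht : 0 ≤ t) (hC : 0 ≤ C)
    {g : ℝ → ℝ} (hg : ∀ s ∈ Ioc 0 t, |g s| ≤ C) :
    |∫ s in (0 : ℝ)..t, Real.exp (-k * (t - s)) * g s| ≤ C / k := by
  calc |∫ s in (0 : ℝ)..t, Real.exp (-k * (t - s)) * g s|
      ≤ ∫ s in (0 : ℝ)..t, Real.exp (-k * (t - s)) * C := by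
        rw [← Real.norm_eq_abs]
        refine intervalIntegral.norm_integral_le_of_norm_le (μ := volume) ht
          (ae_of_all _ fun s hs => ?_)
          ((by fun_prop : Continuous fun s => Real.exp (-k * (t - s)) * C).intervalIntegrable _ _)
        rw [Real.norm_eq_abs, abs_mul, abs_of_pos (Real.exp_pos _)]
        exact mul_le_mul_of_nonneg_left (hg s hs) (Real.exp_pos _).le
    _ = (1 - Real.exp (-k * t)) * C / k := by
        rw [intervalIntegral.integral_mul_const, integral_exp_decay hk.ne', div_mul_eq_mul_div]
    _ ≤ C / k := by
        gcongr
        nlinarith [Real.exp_pos (-k * t)]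

lemma abs_integral_exp_decay_sub_le {k t C : ℝ} (hk : 0 < k) (ht : 0 ≤ t) (hC : 0 ≤ C)
    {g₁ g₂ : ℝ → ℝ} (hg₁ : IntervalIntegrable g₁ volume 0 t)
    (hg₂ : IntervalIntegrable g₂ volume 0 t) (hg : ∀ s ∈ Ioc 0 t, |g₁ s - g₂ s| ≤ C) :
    |(∫ s in (0 : ℝ)..t, Real.exp (-k * (t - s)) * g₁ s) -
        ∫ s in (0 : ℝ)..t, Real.exp (-k * (t - s)) * g₂ s| ≤ C / k := by
  have hcont : ContinuousOn (fun s => Real.exp (-k * (t - s))) (uIcc 0 t) :=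
    (by fun_prop : Continuous fun s => Real.exp (-k * (t - s))).continuousOn
  rw [← intervalIntegral.integral_sub (hg₁.continuousOn_mul hcont) (hg₂.continuousOn_mul hcont)]
  simp_rw [← mul_sub]
  exact abs_integral_exp_decay_mul_le hk ht hC hg

lemma sum_pow_toNat_sub_le {r : ℝ} (hr₀ : 0 ≤ r) (hr₁ : r < 1) {s : Finset ℤ} {n : ℤ}
    (hs : ∀ i ∈ s, i ≤ n) : ∑ i ∈ s, r ^ (n - i).toNat ≤ (1 - r)⁻¹ := by
  have hinj : InjOn (fun i => (n - i).toNat) s := fun i hi j hj hij => by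
    have := hs i hi
    have := hs j hj
    simp only at hij
    omega
  rw [← Finset.sum_image (g := fun i => (n - i).toNat) (f := fun j => r ^ j) hinj,
    ← tsum_geometric_of_lt_one hr₀ hr₁]
  exact (summable_geometric_of_lt_one hr₀ hr₁).sum_le_tsum _ fun j _ => pow_nonneg hr₀ j

lemma sum_exp_impulse_le {ω k t : ℝ} {θ : ℤ → ℝ} (hω : 0 < ω)
    (hθ : ∀ i : ℤ, (i : ℝ) * ω ≤ θ i ∧ θ i < ((i : ℝ) + 1) * ω) (hk : 0 < k) {s : Finset ℤ}
    (hs : ∀ i ∈ s, θ i < t) :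
    ∑ i ∈ s, Real.exp (-k * (t - θ i)) ≤ Real.exp (k * ω) / (1 - Real.exp (-(k * ω))) := by
  set n : ℤ := ⌈t / ω⌉ - 1
  have hnt : n * ω < t := by
    have := Int.ceil_lt_add_one (t / ω)
    have : (n : ℝ) < t / ω := by push_cast [n]; linarith
    rwa [lt_div_iff₀ hω] at this
  have hin : ∀ i ∈ s, i ≤ n := fun i hi => by
    have : (i : ℝ) < t / ω := (lt_div_iff₀ hω).2 ((hθ i).1.trans_lt (hs i hi))
    have : i < ⌈t / ω⌉ := by exact_mod_cast this.trans_le (Int.le_ceil _)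
    omega
  have hterm : ∀ i ∈ s,
      Real.exp (-k * (t - θ i)) ≤ Real.exp (k * ω) * Real.exp (-(k * ω)) ^ (n - i).toNat := by
    intro i hi
    have hcast : ((n - i).toNat : ℝ) = n - i := by
      rw [← Int.cast_natCast, Int.toNat_of_nonneg (by linarith [hin i hi])]
      push_cast
      ring
    rw [← Real.exp_nat_mul, ← Real.exp_add, hcast]
    gcongr
    nlinarith [(hθ i).2]
  calc ∑ i ∈ s, Real.exp (-k * (t - θ i))
      ≤ ∑ i ∈ s, Real.exp (k * ω) * Real.exp (-(k * ω)) ^ (n - i).toNat :=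
        Finset.sum_le_sum hterm
    _ = Real.exp (k * ω) * ∑ i ∈ s, Real.exp (-(k * ω)) ^ (n - i).toNat := by rw [Finset.mul_sum]
    _ ≤ Real.exp (k * ω) * (1 - Real.exp (-(k * ω)))⁻¹ := by
        gcongr
        exact sum_pow_toNat_sub_le (Real.exp_pos _).le
          (Real.exp_lt_one_iff.2 (by nlinarith)) hin
    _ = Real.exp (k * ω) / (1 - Real.exp (-(k * ω))) := by rw [div_eq_mul_inv]

lemma mem_Icc_of_impulse_mem {ω t : ℝ} {θ : ℤ → ℝ} (hω : 0 < ω)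
    (hθ : ∀ i : ℤ, (i : ℝ) * ω ≤ θ i ∧ θ i < ((i : ℝ) + 1) * ω) {i : ℤ}
    (hi : 0 ≤ θ i ∧ θ i < t) : i ∈ Finset.Icc 0 ⌈t / ω⌉ := by
  have hi₀ : (-1 : ℤ) < i := by
    have : (-1 : ℝ) < i := by nlinarith [(hθ i).2]
    exact_mod_cast this
  have hit : (i : ℝ) ≤ t / ω := (le_div_iff₀ hω).2 ((hθ i).1.trans hi.2.le)
  exact Finset.mem_Icc.2 ⟨by omega, Int.le_ceil_iff.2 (by linarith)⟩

lemma abs_tsum_impulse_sub_le {ω k t C : ℝ} {θ : ℤ → ℝ} (hω : 0 < ω)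
    (hθ : ∀ i : ℤ, (i : ℝ) * ω ≤ θ i ∧ θ i < ((i : ℝ) + 1) * ω) (hk : 0 < k) (hC : 0 ≤ C)
    {a₁ a₂ : ℤ → ℝ} (ha : ∀ i, 0 ≤ θ i → θ i < t → |a₁ i - a₂ i| ≤ C) :
    |(∑' i, if 0 ≤ θ i ∧ θ i < t then Real.exp (-k * (t - θ i)) * a₁ i else 0) -
        ∑' i, if 0 ≤ θ i ∧ θ i < t then Real.exp (-k * (t - θ i)) * a₂ i else 0| ≤
      C * (Real.exp (k * ω) / (1 - Real.exp (-(k * ω)))) := by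
  set S := (Finset.Icc 0 ⌈t / ω⌉).filter fun i => 0 ≤ θ i ∧ θ i < t
  have htsum : ∀ a : ℤ → ℝ,
      (∑' i, if 0 ≤ θ i ∧ θ i < t then Real.exp (-k * (t - θ i)) * a i else 0) =
        ∑ i ∈ S, Real.exp (-k * (t - θ i)) * a i := fun a => by
    rw [Finset.sum_filter]
    exact tsum_eq_sum fun i hi => if_neg fun h => hi (mem_Icc_of_impulse_mem hω hθ h)
  rw [htsum, htsum, ← Finset.sum_sub_distrib]
  calc |∑ i ∈ S, (Real.exp (-k * (t - θ i)) * a₁ i - Real.exp (-k * (t - θ i)) * a₂ i)|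
      ≤ ∑ i ∈ S, |Real.exp (-k * (t - θ i)) * a₁ i - Real.exp (-k * (t - θ i)) * a₂ i| :=
        Finset.abs_sum_le_sum_abs _ _
    _ ≤ ∑ i ∈ S, C * Real.exp (-k * (t - θ i)) := Finset.sum_le_sum fun i hi => by
        obtain ⟨hi₀, hit⟩ := (Finset.mem_filter.1 hi).2
        rw [← mul_sub, abs_mul, abs_of_pos (Real.exp_pos _), mul_comm]
        exact mul_le_mul_of_nonneg_right (ha i hi₀ hit) (Real.exp_pos _).le
    _ = C * ∑ i ∈ S, Real.exp (-k * (t - θ i)) := (Finset.mul_sum _ _ _).symm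
    _ ≤ C * (Real.exp (k * ω) / (1 - Real.exp (-(k * ω)))) := by
        gcongr
        exact sum_exp_impulse_le hω hθ hk fun i hi => (Finset.mem_filter.1 hi).2.2

lemma abs_PiOp_zero_sub_le {m : ℕ} {ω : ℝ} {θ : ℤ → ℝ} (hω : 0 < ω)
    (hθ : ∀ i : ℤ, (i : ℝ) * ω ≤ θ i ∧ θ i < ((i : ℝ) + 1) * ω)
    {k l : Fin (m + 1) → ℝ} {lJ : ℝ} (hk : 0 < k 0) (hl : 0 ≤ l 0) (hlJ : 0 ≤ lJ)
    {w₀ : (Fin (m + 1) → ℝ) → ℝ} {w : Fin (m + 1) → ℝ → ℝ → ℝ} {u₀ : ℝ → ℝ}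
    (hw₀meas : Measurable w₀)
    (hw₀lip : ∀ v v' : Fin (m + 1) → ℝ,
      |w₀ v - w₀ v'| ≤ l 0 * Real.sqrt (2 * m) * eNorm (fun j => v j - v' j))
    (hu₀lip : ∀ z z' : ℝ, |u₀ z - u₀ z'| ≤ lJ * |z - z'|)
    {v0 : Fin (m + 1) → ℝ} {ψ₁ ψ₂ : ℝ → Fin (m + 1) → ℝ}
    (hψ₁meas : Measurable ψ₁) (hψ₂meas : Measurable ψ₂)
    (hψ₁bd : ∃ B, ∀ t, eNorm (ψ₁ t) ≤ B) (hψ₂bd : ∃ B, ∀ t, eNorm (ψ₂ t) ≤ B)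
    {D : ℝ} (hD₀ : 0 ≤ D) (hD : ∀ s, 0 ≤ s → eNorm (fun j => ψ₁ s j - ψ₂ s j) ≤ D)
    {t : ℝ} (ht : 0 ≤ t) :
    |PiOp m θ k w₀ w u₀ v0 ψ₁ t 0 - PiOp m θ k w₀ w u₀ v0 ψ₂ t 0| ≤
      (l 0 * Real.sqrt (2 * m) / k 0 + lJ * Real.exp (k 0 * ω) / (1 - Real.exp (-(k 0 * ω)))) *
        D := by
  have hL : 0 ≤ l 0 * Real.sqrt (2 * m) := mul_nonneg hl (Real.sqrt_nonneg _)
  have hint : ∀ ψ : ℝ → Fin (m + 1) → ℝ, Measurable ψ → (∃ B, ∀ t, eNorm (ψ t) ≤ B) →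
      IntervalIntegrable (fun s => w₀ (ψ s)) volume 0 t := by
    rintro ψ hψ ⟨B, hB⟩
    refine intervalIntegrable_of_abs_le (g := fun s => w₀ (ψ s)) (hw₀meas.comp hψ)
      ⟨|w₀ 0| + l 0 * Real.sqrt (2 * m) * B, fun s => ?_⟩ _ _
    have hlip := hw₀lip (ψ s) 0
    simp only [Pi.zero_apply, sub_zero] at hlip
    have := mul_le_mul_of_nonneg_left (hB s) hL
    linarith [abs_sub_abs_le_abs_sub (w₀ (ψ s)) (w₀ 0)]
  have hintegral := abs_integral_exp_decay_sub_le hk ht (mul_nonneg hL hD₀)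
    (hint ψ₁ hψ₁meas hψ₁bd) (hint ψ₂ hψ₂meas hψ₂bd)
    fun s hs => (hw₀lip _ _).trans (mul_le_mul_of_nonneg_left (hD s hs.1.le) hL)
  have himpulse := abs_tsum_impulse_sub_le (t := t) hω hθ hk (mul_nonneg hlJ hD₀)
    (a₁ := fun i => u₀ (ψ₁ (θ i) 0)) (a₂ := fun i => u₀ (ψ₂ (θ i) 0)) fun i hi _ =>
      (hu₀lip _ _).trans (mul_le_mul_of_nonneg_left
        ((abs_le_eNorm (fun j => ψ₁ (θ i) j - ψ₂ (θ i) j) 0).trans (hD _ hi)) hlJ)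
  simp only [PiOp, if_true]
  rw [show ∀ a b c b' c' : ℝ, a + b + c - (a + b' + c') = (b - b') + (c - c') by intros; ring]
  exact (abs_add_le _ _).trans ((add_le_add hintegral himpulse).trans_eq (by ring))

lemma abs_PiOp_sub_le_of_ne_zero {m : ℕ} {θ : ℤ → ℝ} {k l : Fin (m + 1) → ℝ} {j : Fin (m + 1)}
    (hj : j ≠ 0) (hk : 0 < k j) (hl : 0 ≤ l j) {w₀ : (Fin (m + 1) → ℝ) → ℝ}
    {w : Fin (m + 1) → ℝ → ℝ → ℝ} {u₀ : ℝ → ℝ}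
    (hwmeas : Measurable fun p : ℝ × ℝ => w j p.1 p.2)
    (hwlip : ∀ a a' b b' : ℝ, |w j a b - w j a' b'| ≤ l j * (|a - a'| + |b - b'|))
    {v0 : Fin (m + 1) → ℝ} {ψ₁ ψ₂ : ℝ → Fin (m + 1) → ℝ}
    (hψ₁meas : Measurable ψ₁) (hψ₂meas : Measurable ψ₂)
    (hψ₁bd : ∃ B, ∀ t, eNorm (ψ₁ t) ≤ B) (hψ₂bd : ∃ B, ∀ t, eNorm (ψ₂ t) ≤ B)
    {D : ℝ} (hD₀ : 0 ≤ D) (hD : ∀ s, 0 ≤ s → eNorm (fun j => ψ₁ s j - ψ₂ s j) ≤ D)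
    {t : ℝ} (ht : 0 ≤ t) :
    |PiOp m θ k w₀ w u₀ v0 ψ₁ t j - PiOp m θ k w₀ w u₀ v0 ψ₂ t j| ≤ 2 * l j / k j * D := by
  have hint : ∀ ψ : ℝ → Fin (m + 1) → ℝ, Measurable ψ → (∃ B, ∀ t, eNorm (ψ t) ≤ B) →
      IntervalIntegrable (fun s => w j (ψ s 0) (ψ s j)) volume 0 t := by
    rintro ψ hψ ⟨B, hB⟩
    refine intervalIntegrable_of_abs_le (g := fun s => w j (ψ s 0) (ψ s j))
      (hwmeas.comp (((measurable_pi_apply 0).comp hψ).prodMk ((measurable_pi_apply j).comp hψ)))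
      ⟨|w j 0 0| + l j * (B + B), fun s => ?_⟩ _ _
    have hlip := hwlip (ψ s 0) 0 (ψ s j) 0
    simp only [sub_zero] at hlip
    have := mul_le_mul_of_nonneg_left
      (add_le_add ((abs_le_eNorm _ 0).trans (hB s)) ((abs_le_eNorm _ j).trans (hB s))) hl
    linarith [abs_sub_abs_le_abs_sub (w j (ψ s 0) (ψ s j)) (w j 0 0)]
  have hintegral := abs_integral_exp_decay_sub_le hk ht (by positivity : 0 ≤ l j * (D + D))
    (hint ψ₁ hψ₁meas hψ₁bd) (hint ψ₂ hψ₂meas hψ₂bd) fun s hs =>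
      (hwlip _ _ _ _).trans (mul_le_mul_of_nonneg_left
        (add_le_add ((abs_le_eNorm (fun i => ψ₁ s i - ψ₂ s i) 0).trans (hD s hs.1.le))
          ((abs_le_eNorm (fun i => ψ₁ s i - ψ₂ s i) j).trans (hD s hs.1.le))) hl)
  simp only [PiOp, if_neg hj, add_sub_add_left_eq_sub]
  exact hintegral.trans_eq (by ring)

theorem stmt13_general
    (m : ℕ) (ω : ℝ) (hω : 0 < ω) (θ : ℤ → ℝ)
    (hθ : ∀ i : ℤ, (i : ℝ) * ω ≤ θ i ∧ θ i < ((i : ℝ) + 1) * ω)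
    (k : Fin (m + 1) → ℝ) (hk : ∀ j, 0 < k j)
    (l : Fin (m + 1) → ℝ) (lJ : ℝ) (hl : ∀ j, 0 ≤ l j) (hlJ : 0 ≤ lJ)
    (w₀ : (Fin (m + 1) → ℝ) → ℝ) (w : Fin (m + 1) → ℝ → ℝ → ℝ) (u₀ : ℝ → ℝ)
    (hw₀meas : Measurable w₀) (hwmeas : ∀ j, Measurable fun p : ℝ × ℝ => w j p.1 p.2)
    (hw₀lip : ∀ v v' : Fin (m + 1) → ℝ,
      |w₀ v - w₀ v'| ≤ l 0 * Real.sqrt (2 * m) * eNorm (fun j => v j - v' j))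
    (hwlip : ∀ j, j ≠ 0 → ∀ a a' b b' : ℝ,
      |w j a b - w j a' b'| ≤ l j * (|a - a'| + |b - b'|))
    (hu₀lip : ∀ z z' : ℝ, |u₀ z - u₀ z'| ≤ lJ * |z - z'|)
    (v0 : Fin (m + 1) → ℝ)
    (ψ1 ψ2 : ℝ → Fin (m + 1) → ℝ) (hψ1meas : Measurable ψ1) (hψ2meas : Measurable ψ2)
    (hψ1bd : ∃ B, ∀ t, eNorm (ψ1 t) ≤ B) (hψ2bd : ∃ B, ∀ t, eNorm (ψ2 t) ≤ B) :
    ∀ t : ℝ, 0 ≤ t →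
      |PiOp m θ k w₀ w u₀ v0 ψ1 t 0 - PiOp m θ k w₀ w u₀ v0 ψ2 t 0| ≤
        (l 0 * Real.sqrt (2 * m) / k 0 + lJ * Real.exp (k 0 * ω) / (1 - Real.exp (-(k 0 * ω)))) *
          (⨆ s : Set.Ici (0 : ℝ), eNorm (fun j => ψ1 s.1 j - ψ2 s.1 j)) ∧
      ∀ j, j ≠ 0 →
        |PiOp m θ k w₀ w u₀ v0 ψ1 t j - PiOp m θ k w₀ w u₀ v0 ψ2 t j| ≤
          2 * l j / k j * (⨆ s : Set.Ici (0 : ℝ), eNorm (fun j => ψ1 s.1 j - ψ2 s.1 j)) := by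
  intro t ht
  have hD : ∀ s, 0 ≤ s → eNorm (fun j => ψ1 s j - ψ2 s j) ≤
      ⨆ s : Set.Ici (0 : ℝ), eNorm (fun j => ψ1 s.1 j - ψ2 s.1 j) :=
    fun s hs => eNorm_sub_le_iSup hψ1bd hψ2bd hs
  have hD₀ := (Real.sqrt_nonneg _).trans (hD 0 le_rfl)
  exact ⟨abs_PiOp_zero_sub_le hω hθ (hk 0) (hl 0) hlJ hw₀meas hw₀lip hu₀lip hψ1meas hψ2meas
      hψ1bd hψ2bd hD₀ hD ht,
    fun j hj => abs_PiOp_sub_le_of_ne_zero hj (hk j) (hl j) (hwmeas j) (hwlip j hj)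
      hψ1meas hψ2meas hψ1bd hψ2bd hD₀ hD ht⟩

/-- contraction estimate for `Π`, proof of Theorem 3: under the Lipschitz
conditions on `w₀, w_j, u₀`, for bounded measurable `ψ¹, ψ²` (with the same initial vector
`v⁰`) one has `|(Πψ¹)₀(t) − (Πψ²)₀(t)| ≤ (l₀√(2m)/k₀ + l_J·e^{k₀ω}/(1−e^{−k₀ω}))·sup_{s≥0}‖ψ¹(s)−ψ²(s)‖`
and `|(Πψ¹)_j(t) − (Πψ²)_j(t)| ≤ (2l_j/k_j)·sup_{s≥0}‖ψ¹(s)−ψ²(s)‖` for all `t ≥ 0`. -/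
theorem stmt13
    (m : ℕ) (hm : 1 ≤ m) (ω : ℝ) (hω : 0 < ω) (θ : ℤ → ℝ)
    (hθ : ∀ i : ℤ, (i : ℝ) * ω ≤ θ i ∧ θ i < ((i : ℝ) + 1) * ω)
    (k : Fin (m + 1) → ℝ) (hk : ∀ j, 0 < k j)
    (l : Fin (m + 1) → ℝ) (lJ : ℝ) (hl : ∀ j, 0 ≤ l j) (hlJ : 0 ≤ lJ)
    (w₀ : (Fin (m + 1) → ℝ) → ℝ) (w : Fin (m + 1) → ℝ → ℝ → ℝ) (u₀ : ℝ → ℝ)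
    (hw₀meas : Measurable w₀) (hwmeas : ∀ j, Measurable fun p : ℝ × ℝ => w j p.1 p.2)
    (hu₀meas : Measurable u₀)
    (hw₀lip : ∀ v v' : Fin (m + 1) → ℝ,
      |w₀ v - w₀ v'| ≤ l 0 * Real.sqrt (2 * m) * eNorm (fun j => v j - v' j))
    (hwlip : ∀ j, j ≠ 0 → ∀ a a' b b' : ℝ,
      |w j a b - w j a' b'| ≤ l j * (|a - a'| + |b - b'|))
    (hu₀lip : ∀ z z' : ℝ, |u₀ z - u₀ z'| ≤ lJ * |z - z'|)
    (v0 : Fin (m + 1) → ℝ)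
    (ψ1 ψ2 : ℝ → Fin (m + 1) → ℝ) (hψ1meas : Measurable ψ1) (hψ2meas : Measurable ψ2)
    (hψ1bd : ∃ B, ∀ t, eNorm (ψ1 t) ≤ B) (hψ2bd : ∃ B, ∀ t, eNorm (ψ2 t) ≤ B) :
    ∀ t : ℝ, 0 ≤ t →
      |PiOp m θ k w₀ w u₀ v0 ψ1 t 0 - PiOp m θ k w₀ w u₀ v0 ψ2 t 0| ≤
        (l 0 * Real.sqrt (2 * m) / k 0 + lJ * Real.exp (k 0 * ω) / (1 - Real.exp (-(k 0 * ω)))) *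
          (⨆ s : Set.Ici (0 : ℝ), eNorm (fun j => ψ1 s.1 j - ψ2 s.1 j)) ∧
      ∀ j, j ≠ 0 →
        |PiOp m θ k w₀ w u₀ v0 ψ1 t j - PiOp m θ k w₀ w u₀ v0 ψ2 t j| ≤
          2 * l j / k j * (⨆ s : Set.Ici (0 : ℝ), eNorm (fun j => ψ1 s.1 j - ψ2 s.1 j)) :=
  stmt13_general m ω hω θ hθ k hk l lJ hl hlJ w₀ w u₀ hw₀meas hwmeas hw₀lip hwlip hu₀lip v0 ψ1 ψ2
    hψ1meas hψ2meas hψ1bd hψ2bd
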